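/- Let E be a meet-semilattice with bottom ⊥, B a generalized Boolean algebra, and π : E → B a representation such that π(E) generates B as a generalized Boolean algebra. Let X_π = {(e, F) ∈ E × Finset E : π(e) = ⨆_{f ∈ F} π(f)}. Then B is isomorphic to the X_π-to-join Booleanization of E: there is a bijection ψ from the collection of compact open subsets of \hat{E}_{X_π} onto B satisfying ψ(∅) = ⊥, ψ(U ∪ V) = ψ(U) ⊔ ψ(V), ψ(U ∩ V) = ψ(U) ⊓ ψ(V), ψ(U \ V) = ψ(U) \ ψ(V), and ψ(M_a) = π(a) for all a ∈ E. (Theorem 3.6.) -/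

import Mathlib

/-- The set of `X`-to-join characters of a meet-semilattice `E` with bottom. -/
def XtoJoinChars {E : Type*} [SemilatticeInf E] [OrderBot E]
    (X : Set (E × Finset E)) : Set (E → Bool) :=
  {φ | φ ⊥ = false ∧ (∀ x y : E, φ (x ⊓ y) = (φ x && φ y)) ∧ (∃ x : E, φ x = true) ∧
    ∀ p ∈ X, (φ p.1 = true ↔ ∃ f ∈ p.2, φ f = true)}

/-- The basic set `M_a = {φ ∈ Ê_X : φ(a) = true}`. -/
def Mset {E : Type*} [SemilatticeInf E] [OrderBot E]
    (X : Set (E × Finset E)) (a : E) : Set (XtoJoinChars X) :=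
  {φ | (φ : E → Bool) a = true}

/-- The compact open subsets of the character space `Ê_X`. -/
def CompactOpens {E : Type*} [SemilatticeInf E] [OrderBot E]
    (X : Set (E × Finset E)) :=
  {U : Set (XtoJoinChars X) // IsCompact U ∧ IsOpen U}

/-- `ψ : KO(Ê_X) → B` sends `∅` to `⊥`, unions to joins, intersections to meets,
set differences to relative complements, and `M_a` to `π a`. -/
def IsBooleanizationMap {E B : Type*} [SemilatticeInf E] [OrderBot E]
    [GeneralizedBooleanAlgebra B] (X : Set (E × Finset E)) (π : E → B)
    (ψ : CompactOpens X → B) : Prop :=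
  (∀ W : CompactOpens X, W.1 = (∅ : Set (XtoJoinChars X)) → ψ W = ⊥) ∧
  (∀ U V W : CompactOpens X, W.1 = U.1 ∪ V.1 → ψ W = ψ U ⊔ ψ V) ∧
  (∀ U V W : CompactOpens X, W.1 = U.1 ∩ V.1 → ψ W = ψ U ⊓ ψ V) ∧
  (∀ U V W : CompactOpens X, W.1 = U.1 \ V.1 → ψ W = ψ U \ ψ V) ∧
  (∀ (a : E) (W : CompactOpens X), W.1 = Mset X a → ψ W = π a)

/-!
`X_π`-to-join characters of `E` correspond to the prime filters of `B`: a prime filter `S` gives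
the character `e ↦ (π e ∈ S)`, and a character `φ` extends to the filter generated by the
elements `π e \ ⨆ f ∈ F, π f` with `φ e` true and `φ` false on `F`, which is prime because
`π(E)` generates `B`. Hence `b ↦ {φ | b lies in the filter of φ}` maps `B` homomorphically onto
a basis of compact open sets of `Ê_{X_π}`. It is injective by the prime ideal theorem, and every
compact open set is a finite union of basic ones, hence lies in its image.
-/

namespace Booleanization

section GeneralizedBooleanAlgebra

variable {E B : Type*} [GeneralizedBooleanAlgebra B]

def Generates (π : E → B) : Prop :=
  ∀ T : Set B, (∀ e : E, π e ∈ T) → ⊥ ∈ T →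
    (∀ a ∈ T, ∀ b ∈ T, a ⊔ b ∈ T ∧ a ⊓ b ∈ T ∧ a \ b ∈ T) → T = Set.univ

@[elab_as_elim]
theorem Generates.induction {π : E → B} (hgen : Generates π) {p : B → Prop}
    (apply : ∀ e, p (π e)) (bot : p ⊥) (sup : ∀ a b, p a → p b → p (a ⊔ b))
    (inf : ∀ a b, p a → p b → p (a ⊓ b)) (sdiff : ∀ a b, p a → p b → p (a \ b)) (b : B) :
    p b := by
  have hT := hgen {b | p b} apply bot fun a ha b hb =>
    ⟨sup a b ha hb, inf a b ha hb, sdiff a b ha hb⟩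
  exact (hT ▸ Set.mem_univ b : b ∈ {b | p b})

def Splits (S : Set B) (b : B) : Prop := ∀ c ∈ S, c ⊓ b ∈ S ∨ c \ b ∈ S

section Splits

variable {S : Set B} {a b : B}

theorem splits_bot : Splits S ⊥ := fun c hc => .inr (by rwa [sdiff_bot])

variable (hS : IsUpperSet S)
include hS

theorem Splits.sup (ha : Splits S a) (hb : Splits S b) : Splits S (a ⊔ b) := by
  intro c hc
  rcases ha c hc with hca | hca
  · exact .inl (hS (inf_le_inf_left c le_sup_left) hca)
  rcases hb _ hca with hcb | hcb
  · exact .inl (hS (le_inf (inf_le_left.trans sdiff_le) (inf_le_right.trans le_sup_right)) hcb)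
  · exact .inr (by rwa [sdiff_sdiff_left] at hcb)

theorem Splits.inf (ha : Splits S a) (hb : Splits S b) : Splits S (a ⊓ b) := by
  intro c hc
  rcases ha c hc with hca | hca
  · rcases hb _ hca with hcb | hcb
    · exact .inl (by rwa [inf_assoc] at hcb)
    · exact .inr (hS (sdiff_le_sdiff inf_le_left inf_le_right) hcb)
  · exact .inr (hS (sdiff_le_sdiff_left inf_le_left) hca)

theorem Splits.sdiff (ha : Splits S a) (hb : Splits S b) : Splits S (a \ b) := by
  intro c hc
  rcases ha c hc with hca | hca
  · rcases hb _ hca with hcb | hcb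
    · refine .inr (hS (le_sdiff.2 ⟨inf_le_left.trans inf_le_left, ?_⟩) hcb)
      exact disjoint_sdiff_self_right.mono_left inf_le_right
    · exact .inl (by rwa [inf_sdiff_assoc] at hcb)
  · exact .inr (hS (sdiff_le_sdiff_left sdiff_le) hca)

end Splits

/-- The nonempty sets satisfying these axioms are the prime filters of `B`; `∅` satisfies them
too. -/
structure IsPrimeFilter (S : Set B) : Prop where
  bot_notMem : ⊥ ∉ S
  sup_mem_iff (a b : B) : a ⊔ b ∈ S ↔ a ∈ S ∨ b ∈ S
  inf_mem_iff (a b : B) : a ⊓ b ∈ S ↔ a ∈ S ∧ b ∈ S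

theorem isPrimeFilter_empty : IsPrimeFilter (∅ : Set B) :=
  ⟨id, by simp, by simp⟩

theorem isPrimeFilter_of_splits {S : Set B} (hS : IsUpperSet S) (hbot : ⊥ ∉ S)
    (hinf : ∀ a ∈ S, ∀ b ∈ S, a ⊓ b ∈ S) (hsplit : ∀ b, Splits S b) : IsPrimeFilter S where
  bot_notMem := hbot
  sup_mem_iff a b := by
    refine ⟨fun hab => (hsplit a _ hab).imp (hS inf_le_right) (hS ?_), ?_⟩
    · exact sdiff_le_iff.2 le_rfl
    · rintro (ha | hb)
      exacts [hS le_sup_left ha, hS le_sup_right hb]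
  inf_mem_iff a b :=
    ⟨fun hab => ⟨hS inf_le_left hab, hS inf_le_right hab⟩, fun h => hinf a h.1 b h.2⟩

theorem isPrimeFilter_compl_of_isPrime (J : Order.Ideal B) (hJ : J.IsPrime) :
    IsPrimeFilter (J : Set B)ᶜ where
  bot_notMem := by simp [J.bot_mem]
  sup_mem_iff a b := by
    simp only [Set.mem_compl_iff, SetLike.mem_coe, Order.Ideal.sup_mem_iff, not_and_or]
  inf_mem_iff a b := by
    simp only [Set.mem_compl_iff, SetLike.mem_coe]
    exact ⟨fun h => ⟨fun ha => h (J.lower inf_le_left ha), fun hb => h (J.lower inf_le_right hb)⟩,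
      fun h hab => (hJ.mem_or_mem hab).elim h.1 h.2⟩

theorem exists_isPrimeFilter_mem {b : B} (hb : b ≠ ⊥) :
    ∃ S : Set B, IsPrimeFilter S ∧ b ∈ S := by
  obtain ⟨J, hJ, -, hdisj⟩ := DistribLattice.prime_ideal_of_disjoint_filter_ideal
    (F := Order.PFilter.principal b) (I := ⊥) <| Set.disjoint_left.2 fun x hbx hx =>
      hb (le_bot_iff.1 ((Order.PFilter.mem_principal.1 hbx).trans (le_bot_iff.1 hx).le))
  exact ⟨_, isPrimeFilter_compl_of_isPrime J hJ,
    Set.disjoint_left.1 hdisj (Order.PFilter.mem_principal.2 le_rfl)⟩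

namespace IsPrimeFilter

variable {S : Set B} (hS : IsPrimeFilter S)
include hS

theorem sdiff_mem_iff (a b : B) : a \ b ∈ S ↔ a ∈ S ∧ b ∉ S := by
  have hdisj := hS.inf_mem_iff (a \ b) b
  have hcover := hS.sup_mem_iff (a ⊓ b) (a \ b)
  rw [inf_sdiff_self_left, iff_false_intro hS.bot_notMem] at hdisj
  rw [sup_inf_sdiff, hS.inf_mem_iff] at hcover
  tauto

theorem finset_sup_mem_iff {ι : Type*} (t : Finset ι) (g : ι → B) :
    t.sup g ∈ S ↔ ∃ i ∈ t, g i ∈ S := by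
  classical
  induction t using Finset.induction_on with
  | empty => simpa using hS.bot_notMem
  | insert i t _ ih => simp [Finset.sup_insert, hS.sup_mem_iff, ih]

theorem eq_of_forall_apply_mem_iff {π : E → B} (hgen : Generates π) {T : Set B}
    (hT : IsPrimeFilter T) (h : ∀ e, π e ∈ S ↔ π e ∈ T) : S = T := by
  ext b
  induction b using hgen.induction with
  | apply e => exact h e
  | bot => simp [hS.bot_notMem, hT.bot_notMem]
  | sup a b ha hb => rw [hS.sup_mem_iff, hT.sup_mem_iff, ha, hb]
  | inf a b ha hb => rw [hS.inf_mem_iff, hT.inf_mem_iff, ha, hb]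
  | sdiff a b ha hb => rw [hS.sdiff_mem_iff, hT.sdiff_mem_iff, ha, hb]

end IsPrimeFilter

end GeneralizedBooleanAlgebra

section Characters

variable {E B : Type*} [GeneralizedBooleanAlgebra B]

def joinRel (π : E → B) : Set (E × Finset E) := {p | π p.1 = p.2.sup π}

/-- For a character `φ` this is the prime filter of `B` that extends `φ` along `π`. -/
def charFilter (π : E → B) (φ : E → Bool) : Set B :=
  {b | ∃ (e : E) (F : Finset E), φ e = true ∧ (∀ f ∈ F, φ f = false) ∧ π e \ F.sup π ≤ b}

variable {π : E → B} {φ : E → Bool}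

theorem isUpperSet_charFilter : IsUpperSet (charFilter π φ) :=
  fun _ _ hab ⟨e, F, he, hF, hle⟩ => ⟨e, F, he, hF, hle.trans hab⟩

theorem splits_charFilter_apply [SemilatticeInf E] (hinf : ∀ x y, π (x ⊓ y) = π x ⊓ π y)
    (hφ : ∀ x y, φ (x ⊓ y) = (φ x && φ y)) (x : E) : Splits (charFilter π φ) (π x) := by
  classical
  rintro c ⟨e, F, he, hF, hle⟩
  cases hx : φ x
  · refine .inr ⟨e, insert x F, he, ?_, ?_⟩
    · simpa [hx] using hF
    · rw [Finset.sup_insert, sup_comm, ← sdiff_sdiff_left]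
      exact sdiff_le_sdiff_right hle
  · refine .inl ⟨e ⊓ x, F, by simp [hφ, he, hx], hF, ?_⟩
    rw [hinf]
    exact le_inf ((sdiff_le_sdiff_right inf_le_left).trans hle) (sdiff_le.trans inf_le_right)

variable [SemilatticeInf E] [OrderBot E]

variable (hinf : ∀ x y, π (x ⊓ y) = π x ⊓ π y) (hφ : φ ∈ XtoJoinChars (joinRel π))
include hinf hφ

theorem exists_eq_true_of_le_sup {e : E} {G : Finset E} (he : φ e = true)
    (hle : π e ≤ G.sup π) : ∃ g ∈ G, φ g = true := by
  classical
  have hcover : (e, G.image (e ⊓ ·)) ∈ joinRel π := by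
    change π e = (G.image (e ⊓ ·)).sup π
    rw [Finset.sup_image, ← inf_eq_left.2 hle, Finset.sup_inf_distrib_left]
    exact Finset.sup_congr rfl fun g _ => (hinf e g).symm
  obtain ⟨_, hf, hft⟩ := (hφ.2.2.2 _ hcover).1 he
  obtain ⟨g, hg, rfl⟩ := Finset.mem_image.1 hf
  rw [hφ.2.1, Bool.and_eq_true] at hft
  exact ⟨g, hg, hft.2⟩

theorem bot_notMem_charFilter : ⊥ ∉ charFilter π φ := by
  rintro ⟨e, F, he, hF, hle⟩
  obtain ⟨g, hg, hgt⟩ := exists_eq_true_of_le_sup hinf hφ he (by simpa using hle)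
  simp [hF g hg] at hgt

theorem apply_mem_charFilter_iff (e : E) : π e ∈ charFilter π φ ↔ φ e = true := by
  classical
  refine ⟨fun ⟨e₀, F, he₀, hF, hle⟩ => ?_, fun he => ⟨e, ∅, he, by simp, by simp⟩⟩
  obtain ⟨g, hg, hgt⟩ := exists_eq_true_of_le_sup hinf hφ he₀ (G := insert e F)
    (by rw [Finset.sup_insert, sup_comm]; exact sdiff_le_iff.1 hle)
  rcases Finset.mem_insert.1 hg with rfl | hg
  · exact hgt
  · simp [hF g hg] at hgt

theorem inf_mem_charFilter {a b : B} (ha : a ∈ charFilter π φ) (hb : b ∈ charFilter π φ) :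
    a ⊓ b ∈ charFilter π φ := by
  classical
  obtain ⟨e, F, he, hF, hle⟩ := ha
  obtain ⟨e', F', he', hF', hle'⟩ := hb
  refine ⟨e ⊓ e', F ∪ F', by simp [hφ.2.1, he, he'], ?_, ?_⟩
  · simpa [or_imp, forall_and] using ⟨hF, hF'⟩
  · rw [hinf, Finset.sup_union]
    exact le_inf ((sdiff_le_sdiff inf_le_left le_sup_left).trans hle)
      ((sdiff_le_sdiff inf_le_right le_sup_right).trans hle')

theorem isPrimeFilter_charFilter (hgen : Generates π) : IsPrimeFilter (charFilter π φ) := by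
  refine isPrimeFilter_of_splits isUpperSet_charFilter (bot_notMem_charFilter hinf hφ)
    (fun a ha b hb => inf_mem_charFilter hinf hφ ha hb) fun b => ?_
  induction b using hgen.induction with
  | apply x => exact splits_charFilter_apply hinf hφ.2.1 x
  | bot => exact splits_bot
  | sup a b ha hb => exact ha.sup isUpperSet_charFilter hb
  | inf a b ha hb => exact ha.inf isUpperSet_charFilter hb
  | sdiff a b ha hb => exact ha.sdiff isUpperSet_charFilter hb

end Characters

section PrimeFilterCharacters

variable {E B : Type*} [SemilatticeInf E] [OrderBot E] [GeneralizedBooleanAlgebra B]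

open scoped Classical in
noncomputable def charOf (π : E → B) (S : Set B) : E → Bool := fun x => decide (π x ∈ S)

variable {π : E → B} (hinf : ∀ x y, π (x ⊓ y) = π x ⊓ π y) (hgen : Generates π)
include hinf hgen

theorem charOf_mem_xtoJoinChars (hbot : π ⊥ = ⊥) {S : Set B} (hS : IsPrimeFilter S)
    (hne : S.Nonempty) : charOf π S ∈ XtoJoinChars (joinRel π) := by
  refine ⟨by simpa [charOf, hbot] using hS.bot_notMem,
    fun x y => Bool.eq_iff_iff.2 (by simp [charOf, hinf, hS.inf_mem_iff]), ?_, ?_⟩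
  · by_contra! hzero
    exact hne.ne_empty <| hS.eq_of_forall_apply_mem_iff hgen isPrimeFilter_empty fun e => by
      simpa [charOf] using hzero e
  · rintro ⟨e, F⟩ (hcover : π e = F.sup π)
    simp [charOf, hcover, hS.finset_sup_mem_iff]

theorem exists_mem_charFilter (hbot : π ⊥ = ⊥) {b : B} (hb : b ≠ ⊥) :
    ∃ φ ∈ XtoJoinChars (joinRel π), b ∈ charFilter π φ := by
  obtain ⟨S, hS, hbS⟩ := exists_isPrimeFilter_mem hb
  have hφ := charOf_mem_xtoJoinChars hinf hgen hbot hS ⟨b, hbS⟩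
  have hSφ : charFilter π (charOf π S) = S :=
    (isPrimeFilter_charFilter hinf hφ hgen).eq_of_forall_apply_mem_iff hgen hS fun e => by
      simp [apply_mem_charFilter_iff hinf hφ, charOf]
  exact ⟨_, hφ, hSφ.symm ▸ hbS⟩

end PrimeFilterCharacters

section Topology

theorem isClopen_setOf_apply_eq {ι : Type*} (i : ι) (v : Bool) :
    IsClopen {g : ι → Bool | g i = v} :=
  (isClopen_discrete {v}).preimage (continuous_apply i)

theorem isCompact_Mset {E : Type*} [SemilatticeInf E] [OrderBot E] (X : Set (E × Finset E))
    (a : E) : IsCompact (Mset X a) := by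
  rw [Subtype.isCompact_iff]
  have himage : Subtype.val '' Mset X a = {g | g ⊥ = false} ∩
      (⋂ (x) (y), {g | g (x ⊓ y) = (g x && g y)}) ∩
      (⋂ p ∈ X, {g | g p.1 = true ↔ ∃ f ∈ p.2, g f = true}) ∩ {g | g a = true} := by
    ext g
    constructor
    · rintro ⟨φ, hφa, rfl⟩
      exact ⟨⟨⟨φ.2.1, by simpa using φ.2.2.1⟩, by simpa using φ.2.2.2.2⟩, hφa⟩
    · rintro ⟨⟨⟨hg0, hgmul⟩, hgX⟩, hga⟩
      exact ⟨⟨g, hg0, by simpa using hgmul, ⟨a, hga⟩, by simpa using hgX⟩, hga, rfl⟩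
  have hmul (x y : E) : IsClosed {g : E → Bool | g (x ⊓ y) = (g x && g y)} :=
    isClosed_eq (continuous_apply _) (by fun_prop)
  have hjoin (p : E × Finset E) :
      IsClosed {g : E → Bool | g p.1 = true ↔ ∃ f ∈ p.2, g f = true} := by
    have hA := isClopen_setOf_apply_eq p.1 true
    have hC := isClopen_biUnion_finset (s := p.2) fun f _ => isClopen_setOf_apply_eq f true
    convert ((hA.inter hC).union (hA.compl.inter hC.compl)).isClosed using 1
    ext g
    simp only [Set.mem_union, Set.mem_inter_iff, Set.mem_compl_iff, Set.mem_iUnion,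
      Set.mem_ofPred_eq, exists_prop]
    exact iff_iff_and_or_not_and_not
  rw [himage]
  refine IsClosed.isCompact (IsClosed.inter (IsClosed.inter (IsClosed.inter ?_ ?_) ?_) ?_)
  · exact (isClopen_setOf_apply_eq ⊥ false).isClosed
  · exact isClosed_iInter fun x => isClosed_iInter (hmul x)
  · exact isClosed_biInter fun p _ => hjoin p
  · exact (isClopen_setOf_apply_eq a true).isClosed

variable {E B : Type*} [SemilatticeInf E] [OrderBot E] [GeneralizedBooleanAlgebra B]

def basicOpen (π : E → B) (b : B) : Set (XtoJoinChars (joinRel π)) :=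
  {φ | b ∈ charFilter π φ}

theorem isOpen_basicOpen (π : E → B) (b : B) : IsOpen (basicOpen π b) := by
  have hunion : basicOpen π b = Subtype.val ⁻¹' ⋃ (e : E) (F : Finset E) (_ : π e \ F.sup π ≤ b),
      {g : E → Bool | g e = true} ∩ ⋂ f ∈ F, {g | g f = false} := by
    ext φ
    simp only [basicOpen, charFilter, Set.mem_preimage, Set.mem_iUnion, Set.mem_inter_iff,
      Set.mem_iInter, Set.mem_ofPred_eq, exists_prop]
    grind
  rw [hunion]
  refine (isOpen_iUnion fun e => isOpen_iUnion fun F => isOpen_iUnion fun _ => ?_).preimage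
    continuous_subtype_val
  exact (isClopen_setOf_apply_eq e true).isOpen.inter
    (isOpen_biInter_finset fun f _ => (isClopen_setOf_apply_eq f false).isOpen)

variable {π : E → B} (hinf : ∀ x y, π (x ⊓ y) = π x ⊓ π y)
include hinf

theorem basicOpen_bot : basicOpen π ⊥ = ∅ :=
  Set.eq_empty_of_forall_notMem fun φ => bot_notMem_charFilter hinf φ.2

theorem basicOpen_apply (e : E) : basicOpen π (π e) = Mset (joinRel π) e := by
  ext φ
  exact apply_mem_charFilter_iff hinf φ.2 e

variable (hgen : Generates π)
include hgen

theorem basicOpen_sup (a b : B) : basicOpen π (a ⊔ b) = basicOpen π a ∪ basicOpen π b := by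
  ext φ
  exact (isPrimeFilter_charFilter hinf φ.2 hgen).sup_mem_iff a b

theorem basicOpen_inf (a b : B) : basicOpen π (a ⊓ b) = basicOpen π a ∩ basicOpen π b := by
  ext φ
  exact (isPrimeFilter_charFilter hinf φ.2 hgen).inf_mem_iff a b

theorem basicOpen_sdiff (a b : B) : basicOpen π (a \ b) = basicOpen π a \ basicOpen π b := by
  ext φ
  exact (isPrimeFilter_charFilter hinf φ.2 hgen).sdiff_mem_iff a b

theorem basicOpen_finset_sup {ι : Type*} (t : Finset ι) (g : ι → B) :
    basicOpen π (t.sup g) = ⋃ i ∈ t, basicOpen π (g i) := by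
  ext φ
  simpa [basicOpen] using (isPrimeFilter_charFilter hinf φ.2 hgen).finset_sup_mem_iff t g

theorem isClosed_basicOpen (b : B) : IsClosed (basicOpen π b) := by
  have hcompl : (basicOpen π b)ᶜ = ⋃ x, basicOpen π (π x \ b) := by
    ext φ
    obtain ⟨x, hx⟩ := φ.2.2.2.1
    simp only [Set.mem_compl_iff, Set.mem_iUnion, basicOpen_sdiff hinf hgen, Set.mem_sdiff,
      basicOpen_apply hinf]
    exact ⟨fun h => ⟨x, hx, h⟩, fun ⟨_, _, h⟩ => h⟩
  rw [← isOpen_compl_iff, hcompl]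
  exact isOpen_iUnion fun x => isOpen_basicOpen π _

theorem isCompact_basicOpen (b : B) : IsCompact (basicOpen π b) := by
  induction b using hgen.induction with
  | apply e => rw [basicOpen_apply hinf]; exact isCompact_Mset (joinRel π) e
  | bot => rw [basicOpen_bot hinf]; exact isCompact_empty
  | sup a b ha hb => rw [basicOpen_sup hinf hgen]; exact ha.union hb
  | inf a b ha _ =>
    rw [basicOpen_inf hinf hgen]
    exact ha.inter_right (isClosed_basicOpen hinf hgen b)
  | sdiff a b ha _ => rw [basicOpen_sdiff hinf hgen]; exact ha.diff (isOpen_basicOpen π b)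

theorem exists_basicOpen_agree (φ : XtoJoinChars (joinRel π)) (I : Finset E) :
    ∃ b, φ ∈ basicOpen π b ∧ ∀ ψ ∈ basicOpen π b, ∀ i ∈ I, ψ.1 i = φ.1 i := by
  classical
  induction I using Finset.induction_on with
  | empty =>
    obtain ⟨x, hx⟩ := φ.2.2.2.1
    exact ⟨π x, by simpa [basicOpen_apply hinf, Mset] using hx, by simp⟩
  | insert i I _ ih =>
    obtain ⟨b, hφb, hb⟩ := ih
    cases hi : φ.1 i
    · refine ⟨b \ π i, ?_, fun ψ hψ j hj => ?_⟩
      · simp_all [basicOpen_sdiff hinf hgen, basicOpen_apply hinf, Mset]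
      · simp only [basicOpen_sdiff hinf hgen, basicOpen_apply hinf, Set.mem_sdiff, Mset] at hψ
        rcases Finset.mem_insert.1 hj with rfl | hj
        · simpa [hi] using hψ.2
        · exact hb ψ hψ.1 j hj
    · refine ⟨b ⊓ π i, ?_, fun ψ hψ j hj => ?_⟩
      · simp_all [basicOpen_inf hinf hgen, basicOpen_apply hinf, Mset]
      · simp only [basicOpen_inf hinf hgen, basicOpen_apply hinf, Set.mem_inter_iff, Mset] at hψ
        rcases Finset.mem_insert.1 hj with rfl | hj
        · simpa [hi] using hψ.2
        · exact hb ψ hψ.1 j hj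

theorem isTopologicalBasis_basicOpen :
    TopologicalSpace.IsTopologicalBasis (Set.range (basicOpen π)) := by
  refine TopologicalSpace.isTopologicalBasis_of_isOpen_of_nhds
    (by rintro _ ⟨b, rfl⟩; exact isOpen_basicOpen π b) fun φ W hφW hW => ?_
  obtain ⟨O, hO, rfl⟩ := isOpen_induced_iff.1 hW
  obtain ⟨I, u, hu, hIu⟩ := isOpen_pi_iff.1 hO φ.1 hφW
  obtain ⟨b, hφb, hb⟩ := exists_basicOpen_agree hinf hgen φ I
  exact ⟨_, ⟨b, rfl⟩, hφb, fun ψ hψ => hIu fun i hi => hb ψ hψ i hi ▸ (hu i hi).2⟩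

theorem exists_basicOpen_eq {W : Set (XtoJoinChars (joinRel π))} (hWc : IsCompact W)
    (hWo : IsOpen W) : ∃ b, basicOpen π b = W := by
  obtain ⟨s, hs, rfl⟩ := eq_finite_iUnion_of_isTopologicalBasis_of_isCompact_open _
    (isTopologicalBasis_basicOpen hinf hgen) W hWc hWo
  exact ⟨hs.toFinset.sup id, by simp [basicOpen_finset_sup hinf hgen]⟩

theorem basicOpen_injective (hbot : π ⊥ = ⊥) : Function.Injective (basicOpen π) := by
  have heq_bot : ∀ c, basicOpen π c = ∅ → c = ⊥ := fun c hc => by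
    by_contra hne
    obtain ⟨φ, hφ, hcφ⟩ := exists_mem_charFilter hinf hgen hbot hne
    exact (Set.eq_empty_iff_forall_notMem.1 hc) ⟨φ, hφ⟩ hcφ
  intro a b hab
  refine le_antisymm (sdiff_eq_bot_iff.1 (heq_bot _ ?_)) (sdiff_eq_bot_iff.1 (heq_bot _ ?_)) <;>
    simp [basicOpen_sdiff hinf hgen, hab]

end Topology

end Booleanization

open Booleanization in
/-- Theorem 3.6.  If `π : E → B` is a representation whose image generates
the generalized Boolean algebra `B`, then `B` is isomorphic to the `X_π`-to-join
Booleanization of `E`: there is a bijection from the compact opens of `Ê_{X_π}` onto `B`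
preserving `∅`, unions, intersections and differences and sending `M_a` to `π a`. -/
theorem statement3 {E B : Type*} [SemilatticeInf E] [OrderBot E]
    [GeneralizedBooleanAlgebra B]
    (π : E → B)
    (hbot : π ⊥ = ⊥)
    (hinf : ∀ x y : E, π (x ⊓ y) = π x ⊓ π y)
    (hgen : ∀ T : Set B, (∀ e : E, π e ∈ T) → ⊥ ∈ T →
      (∀ a ∈ T, ∀ b ∈ T, a ⊔ b ∈ T ∧ a ⊓ b ∈ T ∧ a \ b ∈ T) → T = Set.univ) :
    ∃ ψ : CompactOpens {p : E × Finset E | π p.1 = p.2.sup π} → B,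
      Function.Bijective ψ ∧
      IsBooleanizationMap {p : E × Finset E | π p.1 = p.2.sup π} π ψ := by
  change ∃ ψ : CompactOpens (joinRel π) → B, _ ∧ IsBooleanizationMap (joinRel π) π ψ
  let u : B → CompactOpens (joinRel π) := fun b =>
    ⟨basicOpen π b, isCompact_basicOpen hinf hgen b, isOpen_basicOpen π b⟩
  have hu : Function.Bijective u :=
    ⟨fun a b hab => basicOpen_injective hinf hgen hbot (congrArg Subtype.val hab),
      fun W => (exists_basicOpen_eq hinf hgen W.2.1 W.2.2).imp fun _ hb => Subtype.ext hb⟩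
  let e := Equiv.ofBijective u hu
  have he : ∀ W c, W.1 = basicOpen π c → e.symm W = c := fun W c h =>
    e.symm_apply_eq.2 (Subtype.ext h)
  have hval : ∀ W, W.1 = basicOpen π (e.symm W) := fun W =>
    congrArg Subtype.val (e.apply_symm_apply W).symm
  refine ⟨e.symm, e.symm.bijective, fun W hW => he W _ ?_, fun U V W hW => he W _ ?_,
    fun U V W hW => he W _ ?_, fun U V W hW => he W _ ?_, fun a W hW => he W _ ?_⟩
  · rw [hW, basicOpen_bot hinf]
  · rw [hW, basicOpen_sup hinf hgen, ← hval, ← hval]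
  · rw [hW, basicOpen_inf hinf hgen, ← hval, ← hval]
  · rw [hW, basicOpen_sdiff hinf hgen, ← hval, ← hval]
  · rw [hW, basicOpen_apply hinf]
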